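/- arXiv:2202.10296 — 2 statements merged into one kernel-verified Lean document; each statement's English description precedes it below -/
import Mathlib

section
/- Fix c, d with 0 < d < c < 1 and set A = (1−c²)^{-1} + d(1−d²)^{-1}. Define p_k = c^k/A for even k and p_k = d^k/A for odd k. Then p is a probability mass function on ℤ₊ whose support is all of ℤ₊ (no holes), yet the p.g.f. P_X(s) = Σ p_k s^k is not absolutely monotone on (−ε,0) for any ε ∈ (0,1); equivalently ρ(X) = 1, so X is not an α-thinned distribution for any α < 1. -/
open scoped BigOperators

/-- `IsPMF p` : `p` is a probability mass function on `ℕ`. -/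
def IsPMF (p : ℕ → ℝ) : Prop :=
  (∀ n, 0 ≤ p n) ∧ HasSum p 1

/-- Binomial `α`-thinning at the level of distributions:
`thin α p k = P(α ∘ X = k)` when `X` has pmf `p`. -/
noncomputable def thin (α : ℝ) (p : ℕ → ℝ) (k : ℕ) : ℝ :=
  ∑' n : ℕ, (n.choose k : ℝ) * α ^ k * (1 - α) ^ (n - k) * p n

/-- Convolution of two pmfs on `ℕ` (law of the sum of independent variables). -/
noncomputable def conv (p q : ℕ → ℝ) (n : ℕ) : ℝ :=
  ∑ k ∈ Finset.range (n + 1), p k * q (n - k)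

/-- `MemM α p` : the distribution `p` is an `α`-thinned distribution, i.e. `p ∈ M_α`. -/
def MemM (α : ℝ) (p : ℕ → ℝ) : Prop :=
  ∃ q : ℕ → ℝ, IsPMF q ∧ ∀ k, p k = thin α q k

/-- `rho p` : the minimal thinning parameter `ρ(X)`. -/
noncomputable def rho (p : ℕ → ℝ) : ℝ :=
  sInf {α : ℝ | α ∈ Set.Icc (0:ℝ) 1 ∧ MemM α p}

/-!
Write `P(t) = ∑ pₖ tᵏ`. For a bounded coefficient sequence and `|s| < 1`, termwise differentiation
gives `P⁽ⁿ⁾(s) = ∑ₖ (k+n)ₙ p_{k+n} sᵏ`, with `(m)ₙ` the falling factorial.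

At `s = -σ` with `n` odd, the terms pair up: the term `(m)ₙ dᵐ σ^{m-n}` with `m` odd is beaten by
the next one, `-(m+1)ₙ c^{m+1} σ^{m+1-n}`, as soon as `(d/c)ᵐ < cσ`. So for every `σ ∈ (0,1)`
some derivative of `P` is negative at `-σ`.

If instead `p` is the `α`-thinning of a pmf `q` with `0 < α < 1`, interchanging the two sums gives
`P⁽ⁿ⁾(s) = αⁿ ∑ₘ (m)ₙ qₘ (1 - α + αs)^{m-n}`, which is nonnegative whenever `1 - α + αs ≥ 0`,
in particular on `(-(1-α)/α, 0)`. Hence `α = 1` is the only admissible thinning parameter (`α = 0`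
is excluded because `p₁ > 0`).
-/

open Finset

noncomputable def pgf (a : ℕ → ℝ) (t : ℝ) : ℝ :=
  ∑' k, a k * t ^ k

section PowerSeries

variable {a : ℕ → ℝ} {C : ℝ}

lemma summable_descFactorial_mul_mul_pow (ha : ∀ k, |a k| ≤ C) (n : ℕ) {s : ℝ} (hs : |s| < 1) :
    Summable fun k => ((k + n).descFactorial n : ℝ) * a (k + n) * s ^ k := by
  have hgeom := summable_descFactorial_mul_geometric_of_norm_lt_one n (r := |s|) (by simpa using hs)
  refine .of_norm_bounded (hgeom.mul_left C) fun k => ?_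
  rw [Real.norm_eq_abs, abs_mul, abs_mul, abs_pow, Nat.abs_cast]
  calc ((k + n).descFactorial n : ℝ) * |a (k + n)| * |s| ^ k
      ≤ ((k + n).descFactorial n : ℝ) * C * |s| ^ k := by gcongr; exact ha _
    _ = C * (((k + n).descFactorial n : ℝ) * |s| ^ k) := by ring

lemma hasDerivAt_pgf {b : ℕ → ℝ} {r s : ℝ} (hs : |s| < r)
    (hb : Summable fun k : ℕ => ((k : ℝ) + 1) * |b (k + 1)| * r ^ k) :
    HasDerivAt (pgf b) (pgf (fun k : ℕ => ((k : ℝ) + 1) * b (k + 1)) s) s := by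
  -- Splitting off the constant term makes the termwise derivatives line up with `pgf`.
  let g : ℕ → ℝ → ℝ := fun k y => b (k + 1) * y ^ (k + 1)
  let g' : ℕ → ℝ → ℝ := fun k y => ((k : ℝ) + 1) * b (k + 1) * y ^ k
  have hg : ∀ k : ℕ, ∀ y ∈ Metric.ball (0 : ℝ) r, HasDerivAt (g k) (g' k y) y := fun k y _ =>
    ((hasDerivAt_pow (k + 1) y).const_mul _).congr_deriv
      (by rw [Nat.add_sub_cancel]; push_cast; ring)
  have hbound : ∀ k : ℕ, ∀ y ∈ Metric.ball (0 : ℝ) r,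
      ‖g' k y‖ ≤ ((k : ℝ) + 1) * |b (k + 1)| * r ^ k := by
    intro k y hy
    rw [mem_ball_zero_iff, Real.norm_eq_abs] at hy
    rw [Real.norm_eq_abs, abs_mul, abs_mul, abs_pow,
      abs_of_nonneg (by positivity : (0 : ℝ) ≤ k + 1)]
    gcongr
  have hs_mem : s ∈ Metric.ball (0 : ℝ) r := by simpa using hs
  have h0_mem : (0 : ℝ) ∈ Metric.ball (0 : ℝ) r := Metric.mem_ball_self ((abs_nonneg s).trans_lt hs)
  have hg0 : Summable fun k => g k 0 := by simp [g]
  have hconn := (convex_ball (0 : ℝ) r).isPreconnected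
  have hshift : pgf b =ᶠ[nhds s] fun y => b 0 + ∑' k, g k y := by
    filter_upwards [Metric.isOpen_ball.mem_nhds hs_mem] with y hy
    have hsum : Summable fun k => g k y := summable_of_summable_hasDerivAt_of_isPreconnected hb
      Metric.isOpen_ball hconn hg hbound h0_mem hg0 hy
    rw [pgf, tsum_eq_zero_add' (f := fun k => b k * y ^ k) hsum]
    simp [g]
  exact ((hasDerivAt_tsum_of_isPreconnected hb Metric.isOpen_ball hconn hg hbound h0_mem hg0
    hs_mem).const_add (b 0)).congr_of_eventuallyEq hshift

lemma succ_mul_descFactorial_add (k n : ℕ) :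
    (k + 1) * (k + 1 + n).descFactorial n = (k + (n + 1)).descFactorial (n + 1) := by
  rw [show k + (n + 1) = k + 1 + n by omega, Nat.descFactorial_succ, Nat.add_sub_cancel]

theorem iteratedDeriv_pgf (ha : ∀ k, |a k| ≤ C) (n : ℕ) {s : ℝ} (hs : |s| < 1) :
    iteratedDeriv n (pgf a) s = pgf (fun k => ((k + n).descFactorial n : ℝ) * a (k + n)) s := by
  induction n generalizing s with
  | zero => simp
  | succ n ih =>
    obtain ⟨r, hsr, hr1⟩ := exists_between hs
    have hr : |r| < 1 := by rwa [abs_of_nonneg ((abs_nonneg s).trans hsr.le)]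
    have heq : iteratedDeriv n (pgf a) =ᶠ[nhds s]
        pgf (fun k => ((k + n).descFactorial n : ℝ) * a (k + n)) := by
      filter_upwards [Metric.isOpen_ball.mem_nhds (by simpa using hs : s ∈ Metric.ball (0 : ℝ) 1)]
        with y hy
      exact ih (by simpa using hy)
    have hb : Summable fun k : ℕ =>
        ((k : ℝ) + 1) * |((k + 1 + n).descFactorial n : ℝ) * a (k + 1 + n)| * r ^ k := by
      convert summable_descFactorial_mul_mul_pow (a := fun k => |a k|) (by simpa using ha) (n + 1)
        hr using 2 with k
      rw [abs_mul, Nat.abs_cast, ← succ_mul_descFactorial_add,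
        show k + (n + 1) = k + 1 + n by omega]
      push_cast
      ring
    rw [iteratedDeriv_succ, heq.deriv_eq,
      (hasDerivAt_pgf (b := fun k => ((k + n).descFactorial n : ℝ) * a (k + n)) hsr hb).deriv]
    congr 1
    funext k
    rw [← succ_mul_descFactorial_add, show k + (n + 1) = k + 1 + n by omega]
    push_cast
    ring

end PowerSeries

lemma IsPMF.abs_le_one {p : ℕ → ℝ} (hp : IsPMF p) (k : ℕ) : |p k| ≤ 1 := by
  rw [abs_of_nonneg (hp.1 k)]
  exact le_hasSum hp.2 k fun j _ => hp.1 j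

section Thinning

lemma thin_one (p : ℕ → ℝ) : thin 1 p = p := by
  funext k
  rw [thin, tsum_eq_single k fun m hm => ?_]
  · simp
  rcases hm.lt_or_gt with h | h
  · simp [Nat.choose_eq_zero_of_lt h]
  · simp [Nat.sub_ne_zero_of_lt h]

lemma thin_zero_succ (q : ℕ → ℝ) (k : ℕ) : thin 0 q (k + 1) = 0 := by
  simp [thin]

lemma descFactorial_mul_choose (m n k : ℕ) :
    (k + n).descFactorial n * m.choose (k + n) = m.descFactorial n * (m - n).choose k := by
  rw [Nat.descFactorial_eq_factorial_mul_choose, Nat.descFactorial_eq_factorial_mul_choose,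
    mul_assoc, mul_assoc, mul_comm ((k + n).choose n), Nat.choose_mul (Nat.le_add_left n k),
    Nat.add_sub_cancel]

lemma sum_descFactorial_mul_binomial (α β y : ℝ) (m n : ℕ) :
    ∑ k ∈ range (m - n + 1), ((k + n).descFactorial n : ℝ) *
        ((m.choose (k + n) : ℝ) * α ^ (k + n) * β ^ (m - (k + n))) * y ^ k =
      m.descFactorial n * α ^ n * (α * y + β) ^ (m - n) := by
  rw [add_pow, mul_sum]
  refine sum_congr rfl fun k _ => ?_
  have h := congrArg (Nat.cast : ℕ → ℝ) (descFactorial_mul_choose m n k)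
  push_cast at h
  calc ((k + n).descFactorial n : ℝ) * ((m.choose (k + n) : ℝ) * α ^ (k + n) * β ^ (m - (k + n)))
        * y ^ k
      = ((k + n).descFactorial n * m.choose (k + n) : ℝ) * (α ^ n * (α * y) ^ k * β ^ (m - n - k))
        := by rw [show m - (k + n) = m - n - k by omega]; ring
    _ = m.descFactorial n * α ^ n * ((α * y) ^ k * β ^ (m - n - k) * (m - n).choose k) := by
        rw [h]; ring

variable {α : ℝ} {q : ℕ → ℝ}

theorem pgf_descFactorial_mul_thin (hα : 0 < α) (hα1 : α ≤ 1) (hq : IsPMF q) (n : ℕ) {s : ℝ}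
    (hs : |s| < 1) :
    pgf (fun k => ((k + n).descFactorial n : ℝ) * thin α q (k + n)) s =
      ∑' m, (m.descFactorial n : ℝ) * α ^ n * q m * (α * s + (1 - α)) ^ (m - n) := by
  let G : ℝ → ℕ → ℕ → ℝ := fun y m k => ((k + n).descFactorial n : ℝ) *
      ((m.choose (k + n) : ℝ) * α ^ (k + n) * (1 - α) ^ (m - (k + n)) * q m) * y ^ k
  have hG_zero : ∀ y m, ∀ k ∉ range (m - n + 1), G y m k = 0 := by
    intro y m k hk
    rw [mem_range] at hk
    simp [G, Nat.choose_eq_zero_of_lt (show m < k + n by omega)]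
  have hslice : ∀ y m, ∑' k, G y m k =
      (m.descFactorial n : ℝ) * α ^ n * q m * (α * y + (1 - α)) ^ (m - n) := by
    intro y m
    rw [tsum_eq_sum (hG_zero y m), mul_right_comm _ (q m), ← sum_descFactorial_mul_binomial,
      sum_mul]
    exact sum_congr rfl fun k _ => by ring
  have hG_abs : ∀ m k, |G s m k| = G |s| m k := by
    intro m k
    have h1α : 0 ≤ 1 - α := by linarith
    simp only [G, abs_mul, abs_pow, Nat.abs_cast, abs_of_nonneg hα.le, abs_of_nonneg h1α,
      abs_of_nonneg (hq.1 m)]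
  -- Absolute convergence: the same computation with `|s|` gives a series in `α|s| + 1 - α < 1`.
  have hsummable : Summable (Function.uncurry (G s)) := by
    refine .of_abs ((summable_prod_of_nonneg fun mk => abs_nonneg _).2 ⟨fun m => ?_, ?_⟩)
    · exact summable_of_ne_finset_zero (s := range (m - n + 1)) fun k hk => by
        simp [hG_zero s m k hk]
    · have hγ : |α * |s| + (1 - α)| < 1 := by
        rw [abs_of_nonneg (by nlinarith [abs_nonneg s])]
        nlinarith
      have hshift : Summable fun j => ((j + n).descFactorial n : ℝ) * q (j + n) *
          (α * |s| + (1 - α)) ^ (j + n - n) := by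
        simpa using summable_descFactorial_mul_mul_pow hq.abs_le_one n hγ
      refine (((summable_nat_add_iff n (f := fun m => (m.descFactorial n : ℝ) * q m *
        (α * |s| + (1 - α)) ^ (m - n))).1 hshift).mul_left (α ^ n)).congr fun m => ?_
      simp only [Function.uncurry, hG_abs, hslice]
      ring
  have hterm : ∀ k, ((k + n).descFactorial n : ℝ) * thin α q (k + n) * s ^ k = ∑' m, G s m k := by
    intro k
    rw [thin, ← tsum_mul_left, ← tsum_mul_right]
  rw [pgf, tsum_congr hterm, hsummable.tsum_comm]
  exact tsum_congr (hslice s)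

theorem MemM.iteratedDeriv_pgf_nonneg {p : ℕ → ℝ} (h : MemM α p) (hp : IsPMF p) (hα : 0 < α)
    (hα1 : α ≤ 1) (n : ℕ) {s : ℝ} (hs : |s| < 1) (hs' : 0 ≤ α * s + (1 - α)) :
    0 ≤ iteratedDeriv n (pgf p) s := by
  obtain ⟨q, hq, hpq⟩ := h
  rw [iteratedDeriv_pgf hp.abs_le_one n hs, show p = thin α q from funext hpq,
    pgf_descFactorial_mul_thin hα hα1 hq n hs]
  exact tsum_nonneg fun m => mul_nonneg (by have := hq.1 m; positivity) (pow_nonneg hs' _)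

end Thinning

section MinimalThinning

variable {p : ℕ → ℝ}

lemma memM_one (hp : IsPMF p) : MemM 1 p :=
  ⟨p, hp, by simp [thin_one]⟩

theorem rho_eq_one_of_iteratedDeriv_pgf_neg (hp : IsPMF p) (hp1 : p 1 ≠ 0)
    (hneg : ∀ σ, 0 < σ → σ < 1 → ∃ n, iteratedDeriv n (pgf p) (-σ) < 0) : rho p = 1 := by
  suffices {α : ℝ | α ∈ Set.Icc (0 : ℝ) 1 ∧ MemM α p} = {1} by rw [rho, this, csInf_singleton]
  refine Set.eq_singleton_iff_unique_mem.2
    ⟨⟨⟨zero_le_one, le_rfl⟩, memM_one hp⟩, fun α ⟨⟨hα0, hα1⟩, hαp⟩ => ?_⟩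
  rcases hα0.eq_or_lt with rfl | hα0
  · obtain ⟨q, -, hpq⟩ := hαp
    exact absurd ((hpq 1).trans (thin_zero_succ q 0)) hp1
  by_contra hα
  have hα1 : α < 1 := hα1.lt_of_ne hα
  -- `s = -(1 - α)/2` lies in `(-1, 0)` and satisfies `1 - α + α s ≥ 0`.
  obtain ⟨n, hn⟩ := hneg ((1 - α) / 2) (by linarith) (by linarith)
  refine hn.not_ge (hαp.iteratedDeriv_pgf_nonneg hp hα0 hα1.le n ?_ ?_)
  · rw [abs_neg, abs_of_pos (by linarith)]
    linarith
  · nlinarith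

end MinimalThinning

lemma Summable.tsum_lt_zero_of_pairs {f : ℕ → ℝ} (hf : Summable f)
    (h : ∀ j, f (2 * j) + f (2 * j + 1) < 0) : ∑' k, f k < 0 := by
  have he : Summable fun j => f (2 * j) := hf.comp_injective fun a b h => by omega
  have ho : Summable fun j => f (2 * j + 1) := hf.comp_injective fun a b h => by omega
  rw [(he.hasSum.even_add_odd ho.hasSum).tsum_eq]
  exact hasSum_lt (fun j => (h j).le) (h 0) (he.hasSum.add ho.hasSum) hasSum_zero

section EvenOddGeometric

variable {c d : ℝ}

noncomputable def evenOddNorm (c d : ℝ) : ℝ :=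
  (1 - c ^ 2)⁻¹ + d * (1 - d ^ 2)⁻¹

noncomputable def evenOddPMF (c d : ℝ) (k : ℕ) : ℝ :=
  if Even k then c ^ k / evenOddNorm c d else d ^ k / evenOddNorm c d

lemma evenOddNorm_pos (hd : 0 < d) (hdc : d < c) (hc : c < 1) : 0 < evenOddNorm c d := by
  have : 0 < 1 - c ^ 2 := by nlinarith
  have : 0 < 1 - d ^ 2 := by nlinarith
  unfold evenOddNorm
  positivity

lemma evenOddPMF_pos (hd : 0 < d) (hdc : d < c) (hc : c < 1) (k : ℕ) : 0 < evenOddPMF c d k := by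
  have := evenOddNorm_pos hd hdc hc
  have : 0 < c := hd.trans hdc
  unfold evenOddPMF
  split_ifs <;> positivity

lemma isPMF_evenOddPMF (hd : 0 < d) (hdc : d < c) (hc : c < 1) : IsPMF (evenOddPMF c d) := by
  refine ⟨fun k => (evenOddPMF_pos hd hdc hc k).le, ?_⟩
  have hA := (evenOddNorm_pos hd hdc hc).ne'
  have heven : HasSum (fun j => evenOddPMF c d (2 * j)) ((1 - c ^ 2)⁻¹ / evenOddNorm c d) := by
    refine ((hasSum_geometric_of_lt_one (sq_nonneg c) (by nlinarith)).div_const _).congr_fun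
      fun j => ?_
    simp only [evenOddPMF, if_pos (even_two_mul j), pow_mul]
  have hodd : HasSum (fun j => evenOddPMF c d (2 * j + 1))
      (d * (1 - d ^ 2)⁻¹ / evenOddNorm c d) := by
    refine (((hasSum_geometric_of_lt_one (sq_nonneg d) (by nlinarith)).mul_left d).div_const
      _).congr_fun fun j => ?_
    rw [evenOddPMF, if_neg (Nat.not_even_two_mul_add_one j), pow_succ, pow_mul, mul_comm]
  convert heven.even_add_odd hodd
  rw [← add_div]
  exact (div_self hA).symm

lemma exists_pow_lt_pow_succ_mul (hd : 0 < d) (hdc : d < c) {σ : ℝ} (hσ : 0 < σ) :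
    ∃ N, ∀ m, N ≤ m → d ^ m < c ^ (m + 1) * σ := by
  have hc : 0 < c := hd.trans hdc
  have hdc' : d / c < 1 := (div_lt_one hc).2 hdc
  obtain ⟨N, hN⟩ := exists_pow_lt_of_lt_one (mul_pos hc hσ) hdc'
  refine ⟨N, fun m hm => ?_⟩
  have h := (pow_le_pow_of_le_one (by positivity) hdc'.le hm).trans_lt hN
  rw [div_pow, div_lt_iff₀ (by positivity)] at h
  rw [pow_succ]
  linarith

lemma exists_iteratedDeriv_pgf_evenOddPMF_neg (hd : 0 < d) (hdc : d < c) (hc : c < 1) {σ : ℝ}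
    (hσ0 : 0 < σ) (hσ1 : σ < 1) : ∃ n, iteratedDeriv n (pgf (evenOddPMF c d)) (-σ) < 0 := by
  have hc0 : 0 < c := hd.trans hdc
  have hA := evenOddNorm_pos hd hdc hc
  obtain ⟨N, hdom⟩ := exists_pow_lt_pow_succ_mul hd hdc hσ0
  refine ⟨2 * N + 1, ?_⟩
  set n := 2 * N + 1
  have hs : |-σ| < 1 := by rwa [abs_neg, abs_of_pos hσ0]
  rw [iteratedDeriv_pgf (isPMF_evenOddPMF hd hdc hc).abs_le_one n hs]
  refine (summable_descFactorial_mul_mul_pow (isPMF_evenOddPMF hd hdc hc).abs_le_one n hs)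
    |>.tsum_lt_zero_of_pairs fun j => ?_
  -- The pair `k = 2j, 2j+1` is `σ^{2j}/A · ((m)ₙ dᵐ - (m+1)ₙ c^{m+1} σ)` with `m = 2j + n` odd.
  set m := 2 * j + n
  have hm_odd : ¬ Even m := by simp [m, n, parity_simps]
  have hm_even : Even (2 * j + 1 + n) := by simp [n, parity_simps]
  have hD : (0 : ℝ) < (m.descFactorial n : ℝ) := mod_cast Nat.descFactorial_pos.2 (by omega)
  have hDle : (m.descFactorial n : ℝ) ≤ ((m + 1).descFactorial n : ℝ) := by
    exact_mod_cast Nat.descFactorial_le n (by omega)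
  have hpair : m.descFactorial n * d ^ m < (m + 1).descFactorial n * (c ^ (m + 1) * σ) :=
    calc (m.descFactorial n : ℝ) * d ^ m < m.descFactorial n * (c ^ (m + 1) * σ) :=
          mul_lt_mul_of_pos_left (hdom m (by omega)) hD
      _ ≤ (m + 1).descFactorial n * (c ^ (m + 1) * σ) := by gcongr
  rw [show 2 * j + 1 + n = m + 1 by omega] at hm_even ⊢
  simp only [evenOddPMF, if_neg hm_odd, if_pos hm_even, pow_succ, pow_mul]
  have hσA : 0 < (σ ^ 2) ^ j / evenOddNorm c d := by positivity
  calc _ = (σ ^ 2) ^ j / evenOddNorm c d *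
        (m.descFactorial n * d ^ m - (m + 1).descFactorial n * (c ^ m * c * σ)) := by ring
    _ < 0 := mul_neg_of_pos_of_neg hσA (by rw [← pow_succ]; linarith)

end EvenOddGeometric

/-- the pmf `p_k = c^k/A` (k even), `d^k/A` (k odd), with
`0 < d < c < 1` and `A = (1−c²)⁻¹ + d(1−d²)⁻¹`, is a probability mass function
with full support (no holes), yet its p.g.f. is not absolutely monotone on
`(−ε,0)` for any `ε ∈ (0,1)`; equivalently `ρ(X) = 1`. -/
theorem stmt_15 (c d A : ℝ) (p : ℕ → ℝ) (hd : 0 < d) (hdc : d < c) (hc : c < 1)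
    (hA : A = (1 - c ^ 2)⁻¹ + d * (1 - d ^ 2)⁻¹)
    (hpdef : ∀ k, p k = if Even k then c ^ k / A else d ^ k / A) :
    IsPMF p ∧ (∀ k, 0 < p k) ∧
    (∀ ε ∈ Set.Ioo (0:ℝ) 1,
      ¬ ∀ n : ℕ, ∀ s ∈ Set.Ioo (-ε) (0:ℝ),
          0 ≤ iteratedDeriv n (fun t : ℝ => ∑' k : ℕ, p k * t ^ k) s) ∧
    rho p = 1 := by
  subst hA
  obtain rfl : p = evenOddPMF c d := funext hpdef
  have hpmf := isPMF_evenOddPMF hd hdc hc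
  have hneg := fun σ (hσ0 : 0 < σ) (hσ1 : σ < 1) =>
    exists_iteratedDeriv_pgf_evenOddPMF_neg hd hdc hc hσ0 hσ1
  refine ⟨hpmf, evenOddPMF_pos hd hdc hc, ?_,
    rho_eq_one_of_iteratedDeriv_pgf_neg hpmf (evenOddPMF_pos hd hdc hc 1).ne' hneg⟩
  rintro ε ⟨hε0, hε1⟩ hmono
  obtain ⟨n, hn⟩ := hneg (ε / 2) (by linarith) (by linarith)
  exact hn.not_ge (hmono n _ ⟨by linarith, by linarith⟩)
end

section
/- Let X have support {0,1,2} with p_i = P(X=i) > 0 for i = 0,1,2 and let Δ = p_1² − 4p_0p_2. Then ρ(X) = (1 + (p_1 − √(max(Δ,0)))/(2p_2))^{-1}; in particular if p_0 = p_1 = p_2 = 1/3 then ρ(X) = 2/3. -/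
/-!
Put `t = α⁻¹ - 1`. A law `p` on `{0,1,2}` can only be the `α`-thinning of a law `q` on
`{0,1,2}`, and inverting the thinning gives `q = (p₀ - t p₁ + t² p₂, (p₁ - 2t p₂)/α, p₂/α²)`.
Hence `p ∈ M_α` iff `2t p₂ ≤ p₁` and `p₂ t² - p₁ t + p₀ ≥ 0` (that is, `p₁*(α) ≥ 0` and
`p₀*(α) ≥ 0`). The quadratic decreases for `t ≤ p₁/(2p₂)`, so these two conditions say exactly
that `t ≤ t* = (p₁ - √(Δ⁺))/(2p₂)`, the smaller root when `Δ ≥ 0`. Thus `p ∈ M_α` iff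
`α ≥ (1 + t*)⁻¹`.
-/

open scoped BigOperators

open Finset

lemma le_smaller_root_iff {a b c t : ℝ} (hc : 0 < c) :
    t ≤ (b - √(max (b ^ 2 - 4 * a * c) 0)) / (2 * c) ↔
      2 * c * t ≤ b ∧ 0 ≤ a - b * t + c * t ^ 2 := by
  have hdisc : 4 * c * (a - b * t + c * t ^ 2) = (b - 2 * c * t) ^ 2 - (b ^ 2 - 4 * a * c) := by
    ring
  rw [le_div_iff₀ (by positivity), le_sub_comm, Real.sqrt_le_iff, max_le_iff]
  constructor
  · rintro ⟨hu, hΔ, -⟩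
    exact ⟨by linarith, by nlinarith⟩
  · rintro ⟨hu, hq⟩
    exact ⟨by linarith, by nlinarith, sq_nonneg _⟩

lemma choose_mul_pow_mul_pow_le_one {α : ℝ} (h0 : 0 ≤ α) (h1 : α ≤ 1) (n k : ℕ) :
    (n.choose k : ℝ) * α ^ k * (1 - α) ^ (n - k) ≤ 1 := by
  rcases le_or_gt k n with hk | hk
  · have h1' : 0 ≤ 1 - α := by linarith
    calc (n.choose k : ℝ) * α ^ k * (1 - α) ^ (n - k)
        = α ^ k * (1 - α) ^ (n - k) * (n.choose k : ℝ) := by ring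
      _ ≤ ∑ j ∈ range (n + 1), α ^ j * (1 - α) ^ (n - j) * (n.choose j : ℝ) :=
          single_le_sum (f := fun j => α ^ j * (1 - α) ^ (n - j) * (n.choose j : ℝ))
            (fun j _ => by positivity) (mem_range.2 (Nat.lt_succ_of_le hk))
      _ = 1 := by rw [← add_pow]; simp
  · simp [Nat.choose_eq_zero_of_lt hk]

lemma thin_zero_left {k : ℕ} (hk : k ≠ 0) (q : ℕ → ℝ) : thin 0 q k = 0 := by
  simp [thin, zero_pow hk]

lemma IsPMF.pow_mul_le_thin {q : ℕ → ℝ} (hq : IsPMF q) {α : ℝ} (h0 : 0 ≤ α) (h1 : α ≤ 1)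
    (k : ℕ) : α ^ k * q k ≤ thin α q k := by
  have h1' : 0 ≤ 1 - α := by linarith
  have hterm : ∀ n, 0 ≤ (n.choose k : ℝ) * α ^ k * (1 - α) ^ (n - k) * q n := fun n => by
    have := hq.1 n
    positivity
  have hsummable : Summable fun n => (n.choose k : ℝ) * α ^ k * (1 - α) ^ (n - k) * q n :=
    .of_nonneg_of_le hterm
      (fun n => mul_le_of_le_one_left (hq.1 n) (choose_mul_pow_mul_pow_le_one h0 h1 n k))
      hq.2.summable
  simpa [thin] using hsummable.le_tsum k (fun n _ => hterm n)

lemma IsPMF.eq_zero_of_thin_eq_zero {q : ℕ → ℝ} (hq : IsPMF q) {α : ℝ} (h0 : 0 < α)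
    (h1 : α ≤ 1) {k : ℕ} (hk : thin α q k = 0) : q k = 0 :=
  le_antisymm (nonpos_of_mul_nonpos_left (mul_comm (α ^ k) (q k) ▸ hk ▸
    hq.pow_mul_le_thin h0.le h1 k) (pow_pos h0 k)) (hq.1 k)

def pmf3 (a b c : ℝ) : ℕ → ℝ
  | 0 => a
  | 1 => b
  | 2 => c
  | _ + 3 => 0

lemma eq_pmf3_of_support {p : ℕ → ℝ} (hsupp : ∀ k, 2 < k → p k = 0) :
    p = pmf3 (p 0) (p 1) (p 2) := by
  funext k
  match k with
  | 0 | 1 | 2 => rfl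
  | k + 3 => exact hsupp (k + 3) (by omega)

lemma pmf3_eq_zero {a b c : ℝ} {n : ℕ} (hn : n ∉ range 3) : pmf3 a b c n = 0 := by
  obtain ⟨m, rfl⟩ : ∃ m, n = m + 3 := ⟨n - 3, by simp at hn; omega⟩
  rfl

lemma hasSum_pmf3 (a b c : ℝ) : HasSum (pmf3 a b c) (a + b + c) := by
  convert hasSum_sum_of_ne_finset_zero (L := SummationFilter.unconditional ℕ)
    (fun n hn => pmf3_eq_zero (a := a) (b := b) (c := c) hn)
  simp [sum_range_succ, pmf3]

lemma thin_pmf3 (α a b c : ℝ) :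
    thin α (pmf3 a b c) =
      pmf3 (a + (1 - α) * b + (1 - α) ^ 2 * c) (α * b + 2 * α * (1 - α) * c) (α ^ 2 * c) := by
  funext k
  rw [thin, tsum_eq_sum (s := range 3) fun n hn => by simp [pmf3_eq_zero hn]]
  match k with
  | 0 | 1 | 2 => simp [sum_range_succ, pmf3]
  | k + 3 =>
    refine sum_eq_zero fun n hn => ?_
    rw [Nat.choose_eq_zero_of_lt (by simp at hn; omega)]
    simp

lemma MemM.pmf3_conditions {a b c α : ℝ} (hα : 0 < α) (hα1 : α ≤ 1)
    (hM : MemM α (pmf3 a b c)) :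
    2 * c * (α⁻¹ - 1) ≤ b ∧ 0 ≤ a - b * (α⁻¹ - 1) + c * (α⁻¹ - 1) ^ 2 := by
  obtain ⟨q, hq, hthin⟩ := hM
  have hq3 : q = pmf3 (q 0) (q 1) (q 2) := eq_pmf3_of_support fun k hk =>
    hq.eq_zero_of_thin_eq_zero hα hα1 ((hthin k).symm.trans (pmf3_eq_zero (by simp; omega)))
  rw [hq3, thin_pmf3] at hthin
  have ha := hthin 0
  have hb := hthin 1
  have hc := hthin 2
  simp only [pmf3] at ha hb hc
  have h1 : b - 2 * c * (α⁻¹ - 1) = α * q 1 := by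
    rw [hb, hc]; field_simp; ring
  have h0 : a - b * (α⁻¹ - 1) + c * (α⁻¹ - 1) ^ 2 = q 0 := by
    rw [ha, hb, hc]; field_simp; ring
  exact ⟨by nlinarith [hq.1 1], h0 ▸ hq.1 0⟩

lemma memM_pmf3 {a b c α : ℝ} (hc : 0 ≤ c) (habc : a + b + c = 1) (hα : 0 < α)
    (h1 : 2 * c * (α⁻¹ - 1) ≤ b) (h0 : 0 ≤ a - b * (α⁻¹ - 1) + c * (α⁻¹ - 1) ^ 2) :
    MemM α (pmf3 a b c) := by
  set t := α⁻¹ - 1 with ht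
  refine ⟨pmf3 (a - b * t + c * t ^ 2) ((b - 2 * c * t) / α) (c / α ^ 2), ⟨?_, ?_⟩, ?_⟩
  · intro n
    match n with
    | 0 => exact h0
    | 1 => exact div_nonneg (by linarith) hα.le
    | 2 => exact div_nonneg hc (by positivity)
    | _ + 3 => exact le_rfl
  · convert hasSum_pmf3 _ _ _
    rw [← habc, ht]; field_simp; ring
  · rw [thin_pmf3]
    intro k
    match k with
    | 0 => simp only [pmf3, ht]; field_simp; ring
    | 1 => simp only [pmf3, ht]; field_simp; ring
    | 2 => simp only [pmf3]; field_simp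
    | _ + 3 => rfl

lemma memM_iff_of_support {p : ℕ → ℝ} (hp : IsPMF p) (hsupp : ∀ k, 2 < k → p k = 0)
    {α : ℝ} (hα : 0 < α) (hα1 : α ≤ 1) :
    MemM α p ↔ 2 * p 2 * (α⁻¹ - 1) ≤ p 1 ∧
      0 ≤ p 0 - p 1 * (α⁻¹ - 1) + p 2 * (α⁻¹ - 1) ^ 2 := by
  obtain ⟨a, b, c, rfl⟩ : ∃ a b c, p = pmf3 a b c := ⟨_, _, _, eq_pmf3_of_support hsupp⟩
  exact ⟨MemM.pmf3_conditions hα hα1,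
    fun ⟨h1, h0⟩ => memM_pmf3 (hp.1 2) ((hasSum_pmf3 a b c).unique hp.2) hα h1 h0⟩

lemma not_memM_zero {p : ℕ → ℝ} {k : ℕ} (hk : k ≠ 0) (hpk : p k ≠ 0) : ¬ MemM 0 p :=
  fun ⟨q, _, hthin⟩ => hpk (by rw [hthin k, thin_zero_left hk])

lemma rho_eq_of_memM_iff {p : ℕ → ℝ} {β : ℝ} (hβ0 : 0 < β) (hβ1 : β ≤ 1) (h0 : ¬ MemM 0 p)
    (h : ∀ α, 0 < α → α ≤ 1 → (MemM α p ↔ β ≤ α)) : rho p = β := by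
  suffices {α : ℝ | α ∈ Set.Icc (0 : ℝ) 1 ∧ MemM α p} = Set.Icc β 1 by
    rw [rho, this, csInf_Icc hβ1]
  ext α
  simp only [Set.mem_ofPred_eq, Set.mem_Icc]
  constructor
  · rintro ⟨⟨hα0, hα1⟩, hM⟩
    obtain hα | rfl := hα0.lt_or_eq
    · exact ⟨(h α hα hα1).1 hM, hα1⟩
    · exact absurd hM h0
  · rintro ⟨hβα, hα1⟩
    have hα : 0 < α := hβ0.trans_le hβα
    exact ⟨⟨hα.le, hα1⟩, (h α hα hα1).2 hβα⟩

theorem stmt_18_general (p : ℕ → ℝ) (hp : IsPMF p)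
    (h2 : 0 < p 2)
    (hsupp : ∀ k, 2 < k → p k = 0) :
    rho p = (1 + (p 1 - Real.sqrt (max (p 1 ^ 2 - 4 * p 0 * p 2) 0)) / (2 * p 2))⁻¹ ∧
    (p 0 = 1 / 3 → p 1 = 1 / 3 → p 2 = 1 / 3 → rho p = 2 / 3) := by
  set tstar := (p 1 - Real.sqrt (max (p 1 ^ 2 - 4 * p 0 * p 2) 0)) / (2 * p 2) with htstar
  have htstar0 : 0 ≤ tstar :=
    (le_smaller_root_iff h2).2 ⟨by simpa using hp.1 1, by simpa using hp.1 0⟩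
  have hrho : rho p = (1 + tstar)⁻¹ := by
    refine rho_eq_of_memM_iff (by positivity) (inv_le_one_of_one_le₀ (by linarith))
      (not_memM_zero two_ne_zero h2.ne') fun α hα hα1 => ?_
    rw [memM_iff_of_support hp hsupp hα hα1, ← le_smaller_root_iff h2, ← htstar,
      inv_le_comm₀ (by positivity) hα, sub_le_iff_le_add']
  refine ⟨hrho, fun e0 e1 e2 => ?_⟩
  rw [hrho, htstar, e0, e1, e2, max_eq_right (by norm_num), Real.sqrt_zero]
  norm_num

/-- for `X` with support `{0,1,2}` and `Δ = p₁² − 4p₀p₂`,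
`ρ(X) = (1 + (p₁ − √(Δ⁺))/(2p₂))⁻¹`; in particular `ρ(X) = 2/3` when all
`p_i = 1/3`. -/
theorem stmt_18 (p : ℕ → ℝ) (hp : IsPMF p)
    (h0 : 0 < p 0) (h1 : 0 < p 1) (h2 : 0 < p 2)
    (hsupp : ∀ k, 2 < k → p k = 0) :
    rho p = (1 + (p 1 - Real.sqrt (max (p 1 ^ 2 - 4 * p 0 * p 2) 0)) / (2 * p 2))⁻¹ ∧
    (p 0 = 1 / 3 → p 1 = 1 / 3 → p 2 = 1 / 3 → rho p = 2 / 3) :=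
  stmt_18_general p hp h2 hsupp
end
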